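/- Let A = A₀ ⊕ A₁ be a supercommutative superalgebra over a field of characteristic ≠ 2. Then A is Noetherian (its super-ideals satisfy the ascending chain condition) if and only if A₀ is a Noetherian commutative ring and A₁ is a finitely generated A₀-module. -/

import Mathlib

/-!
A super-ideal is in particular a left `A₀`-submodule of `A`. So if `A₀` is a Noetherian ring and
`A = A₀ + A₀ s` is a finite `A₀`-module, `A` is a Noetherian `A₀`-module and super-ideals satisfy
ACC.

Conversely, an `A₀`-submodule `N` contained in `A₀` or in `A₁` generates the super-ideal
`N ⊕ A₁ N`. Since `A₁ N` lies in the other homogeneous component, `N` is recovered as a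
component of that super-ideal, so ACC on super-ideals gives ACC on ideals of `A₀` and on
`A₀`-submodules of `A₁`; the latter makes `A₁` a Noetherian, hence finitely generated,
`A₀`-module.
-/

/-- A super-ideal of the superalgebra `A` (with grading `A0, A1`): a graded two-sided ideal. -/
def IsSuperIdeal (k A : Type) [Field k] [Ring A] [Algebra k A]
    (A0 A1 I : Submodule k A) : Prop :=
  (∀ x ∈ I, ∀ a : A, a * x ∈ I ∧ x * a ∈ I) ∧
  (∀ a ∈ A0, ∀ b ∈ A1, a + b ∈ I → a ∈ I ∧ b ∈ I)

/-- `A` is Noetherian as a superalgebra: its super-ideals satisfy the ascending chain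
condition. -/
def SuperNoetherian (k A : Type) [Field k] [Ring A] [Algebra k A]
    (A0 A1 : Submodule k A) : Prop :=
  ∀ f : ℕ → Submodule k A, (∀ n, IsSuperIdeal k A A0 A1 (f n)) → Monotone f →
    ∃ n, ∀ m, n ≤ m → f m = f n

def ChainCondition {α : Type*} [Preorder α] (P : α → Prop) : Prop :=
  ∀ f : ℕ → α, (∀ n, P (f n)) → Monotone f → ∃ n, ∀ m, n ≤ m → f m = f n

theorem chainCondition_iff_wellFoundedGT {α : Type*} [PartialOrder α] {P : α → Prop} :
    ChainCondition P ↔ WellFoundedGT {x // P x} := by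
  rw [wellFoundedGT_iff_monotone_chain_condition]
  constructor
  · intro h f
    obtain ⟨n, hn⟩ := h (fun n => f n) (fun n => (f n).2) f.monotone
    exact ⟨n, fun m hm => Subtype.ext (hn m hm).symm⟩
  · intro h f hP hf
    obtain ⟨n, hn⟩ := h ⟨fun n => ⟨f n, hP n⟩, hf⟩
    exact ⟨n, fun m hm => congrArg Subtype.val (hn m hm).symm⟩

section ScalarExtension

variable {R A : Type*} [CommRing R] [Ring A] [Algebra R A] (S : Subalgebra R A)

namespace Submodule

def extendScalarsOfMulMem (N : Submodule R A) (h : ∀ a ∈ S, ∀ x ∈ N, a * x ∈ N) :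
    Submodule S A where
  __ := N
  smul_mem' a _ hx := h a a.2 _ hx

theorem span_mul_eq_restrictScalars_span (t : Set A) :
    span R {z | ∃ a ∈ S, ∃ b ∈ t, z = a * b} = (span S t).restrictScalars R := by
  rw [← span_smul_of_span_eq_top span_univ]
  congr 1
  ext z
  simp [Set.mem_smul, Subalgebra.smul_def, eq_comm]

end Submodule

open Submodule

theorem isNoetherian_of_chainCondition {M : Type*} [AddCommGroup M] [Module S M]
    (f : M →ₗ[S] A) (hf : Function.Injective f) {B : Submodule R A} (hfB : ∀ x, f x ∈ B)
    (h : ChainCondition fun N : Submodule R A => N ≤ B ∧ ∀ a ∈ S, ∀ x ∈ N, a * x ∈ N) :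
    IsNoetherian S M := by
  rw [chainCondition_iff_wellFoundedGT] at h
  rw [isNoetherian_iff']
  let φ : Submodule S M → {N : Submodule R A // N ≤ B ∧ ∀ a ∈ S, ∀ x ∈ N, a * x ∈ N} :=
    fun N => ⟨(N.map f).restrictScalars R, by
      refine ⟨?_, ?_⟩
      · rintro _ ⟨y, -, rfl⟩; exact hfB y
      · rintro a ha _ ⟨y, hy, rfl⟩
        exact ⟨(⟨a, ha⟩ : S) • y, N.smul_mem _ hy, f.map_smul _ _⟩⟩
  refine StrictMono.wellFoundedGT (f := φ) (Monotone.strictMono_of_injective ?_ ?_)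
  · intro N N' hle
    exact map_mono hle
  · intro N N' hNN'
    exact map_injective_of_injective hf
      (restrictScalars_injective R _ _ (congrArg Subtype.val hNN'))

theorem chainCondition_of_isNoetherian [IsNoetherian S A] {P : Submodule R A → Prop}
    (hP : ∀ N, P N → ∀ a ∈ S, ∀ x ∈ N, a * x ∈ N) : ChainCondition P := by
  rw [chainCondition_iff_wellFoundedGT]
  refine StrictMono.wellFoundedGT
    (f := fun N : {N // P N} => N.1.extendScalarsOfMulMem S (hP _ N.2))
    (Monotone.strictMono_of_injective (fun N N' hle => hle) fun N N' hNN' => ?_)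
  exact Subtype.ext (congrArg (restrictScalars R) hNN' :)

theorem module_finite_of_sup_eq_top {B : Submodule R A}
    (hB : Subalgebra.toSubmodule S ⊔ B = ⊤) (s : Finset A)
    (hs : B ≤ span R {z | ∃ a ∈ S, ∃ b ∈ (s : Set A), z = a * b}) : Module.Finite S A := by
  classical
  refine ⟨⟨insert 1 s, ?_⟩⟩
  rw [← restrictScalars_eq_top_iff R, eq_top_iff, ← hB, Finset.coe_insert, span_insert,
    restrictScalars_sup]
  refine sup_le_sup (fun a ha => mem_span_singleton.2 ⟨⟨a, ha⟩, mul_one a⟩) ?_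
  rwa [← span_mul_eq_restrictScalars_span]

end ScalarExtension

section Superalgebra

open Submodule

variable {k A : Type} [Field k] [Ring A] [Algebra k A] {A0 A1 : Submodule k A}

theorem mem_and_mem_of_add_mem_sup (hdisj : A0 ⊓ A1 = ⊥) {P Q : Submodule k A} (hP : P ≤ A0)
    (hQ : Q ≤ A1) {a b : A} (ha : a ∈ A0) (hb : b ∈ A1) (hab : a + b ∈ P ⊔ Q) : a ∈ P ∧ b ∈ Q := by
  obtain ⟨p, hp, q, hq, hpq⟩ := mem_sup.1 hab
  have hap : a - p = q - b := by rw [sub_eq_sub_iff_add_eq_add, ← hpq, add_comm]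
  have hmem : a - p ∈ A0 ⊓ A1 := ⟨sub_mem ha (hP hp), hap ▸ sub_mem (hQ hq) hb⟩
  rw [hdisj, mem_bot, sub_eq_zero] at hmem
  subst hmem
  obtain rfl := add_left_cancel hpq
  exact ⟨hp, hq⟩

theorem isSuperIdeal_sup (hsum : A0 ⊔ A1 = ⊤) (hdisj : A0 ⊓ A1 = ⊥)
    (hcentral : ∀ a ∈ A0, ∀ x : A, a * x = x * a)
    (hanti : ∀ a ∈ A1, ∀ b ∈ A1, a * b = -(b * a))
    {P Q : Submodule k A} (hP : P ≤ A0) (hQ : Q ≤ A1) (hmul : ⊤ * (P ⊔ Q) ≤ P ⊔ Q) :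
    IsSuperIdeal k A A0 A1 (P ⊔ Q) := by
  have hleft : ∀ c, ∀ x ∈ P ⊔ Q, c * x ∈ P ⊔ Q := fun c x hx => hmul (mul_mem_mul mem_top hx)
  refine ⟨fun x hx c => ⟨hleft c x hx, ?_⟩, fun a ha b hb hab => ?_⟩
  · obtain ⟨p, hp, q, hq, rfl⟩ := mem_sup.1 hx
    obtain ⟨c0, hc0, c1, hc1, rfl⟩ := mem_sup.1 (hsum ▸ mem_top : c ∈ A0 ⊔ A1)
    -- supercommutativity turns right multiplication into left multiplication
    have hswap : (p + q) * (c0 + c1) = (c0 + c1) * p + (c0 * q - c1 * q) := by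
      rw [add_mul, mul_add q, ← hcentral p (hP hp), ← hcentral c0 hc0, hanti q (hQ hq) c1 hc1,
        sub_eq_add_neg]
    rw [hswap]
    exact add_mem (hleft _ p (mem_sup_left hp))
      (sub_mem (hleft c0 q (mem_sup_right hq)) (hleft c1 q (mem_sup_right hq)))
  · have h := mem_and_mem_of_add_mem_sup hdisj hP hQ ha hb hab
    exact ⟨mem_sup_left h.1, mem_sup_right h.2⟩

theorem odd_mul_even_le (h01 : ∀ a ∈ A0, ∀ b ∈ A1, a * b ∈ A1)
    (hcentral : ∀ a ∈ A0, ∀ x : A, a * x = x * a) : A1 * A0 ≤ A1 := by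
  rw [← mul_comm_of_commute fun a ha x _ => hcentral a ha x]
  exact mul_le.2 h01

theorem isSuperIdeal_sup_mul (hsum : A0 ⊔ A1 = ⊤) (hdisj : A0 ⊓ A1 = ⊥)
    (h01 : ∀ a ∈ A0, ∀ b ∈ A1, a * b ∈ A1) (h11 : ∀ a ∈ A1, ∀ b ∈ A1, a * b ∈ A0)
    (hcentral : ∀ a ∈ A0, ∀ x : A, a * x = x * a)
    (hanti : ∀ a ∈ A1, ∀ b ∈ A1, a * b = -(b * a))
    {N : Submodule k A} (hN : N ≤ A0 ∨ N ≤ A1) (hN0 : A0 * N ≤ N) :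
    IsSuperIdeal k A A0 A1 (N ⊔ A1 * N) := by
  have hmul : ⊤ * (N ⊔ A1 * N) ≤ N ⊔ A1 * N := by
    rw [← hsum, Submodule.sup_mul, Submodule.mul_sup, Submodule.mul_sup]
    refine sup_le (sup_le (le_sup_of_le_left hN0) ?_) (sup_le le_sup_right ?_)
    · calc A0 * (A1 * N) = A1 * (A0 * N) := by
            rw [← mul_assoc, mul_comm_of_commute fun a ha x _ => hcentral a ha x, mul_assoc]
        _ ≤ A1 * N := mul_le_mul_right hN0 _
        _ ≤ _ := le_sup_right
    · calc A1 * (A1 * N) ≤ A0 * N := by rw [← mul_assoc]; exact mul_le_mul_left (mul_le.2 h11) _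
        _ ≤ N := hN0
        _ ≤ _ := le_sup_left
  rcases hN with hN | hN
  · exact isSuperIdeal_sup hsum hdisj hcentral hanti hN
      ((mul_le_mul_right hN _).trans (odd_mul_even_le h01 hcentral)) hmul
  · rw [sup_comm] at hmul ⊢
    exact isSuperIdeal_sup hsum hdisj hcentral hanti
      ((mul_le_mul_right hN _).trans (mul_le.2 h11)) hN hmul

theorem chainCondition_of_superNoetherian (hsum : A0 ⊔ A1 = ⊤) (hdisj : A0 ⊓ A1 = ⊥)
    (h01 : ∀ a ∈ A0, ∀ b ∈ A1, a * b ∈ A1) (h11 : ∀ a ∈ A1, ∀ b ∈ A1, a * b ∈ A0)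
    (hcentral : ∀ a ∈ A0, ∀ x : A, a * x = x * a)
    (hanti : ∀ a ∈ A1, ∀ b ∈ A1, a * b = -(b * a))
    (h : SuperNoetherian k A A0 A1) (B : Submodule k A) (hB : B = A0 ∨ B = A1) :
    ChainCondition fun N : Submodule k A => N ≤ B ∧ ∀ a ∈ A0, ∀ x ∈ N, a * x ∈ N := by
  have hsuper : WellFoundedGT {I // IsSuperIdeal k A A0 A1 I} :=
    chainCondition_iff_wellFoundedGT.1 h
  have hcompl : ∀ N ≤ B, A1 * N ⊓ B = ⊥ := by
    rcases hB with rfl | rfl <;> intro N hN <;> refine eq_bot_iff.2 fun x hx => ?_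
    · rw [← hdisj, inf_comm]
      exact ⟨(mul_le_mul_right hN _).trans (odd_mul_even_le h01 hcentral) hx.1, hx.2⟩
    · rw [← hdisj]
      exact ⟨(mul_le_mul_right hN _).trans (mul_le.2 h11) hx.1, hx.2⟩
  rw [chainCondition_iff_wellFoundedGT]
  let φ : {N : Submodule k A // N ≤ B ∧ ∀ a ∈ A0, ∀ x ∈ N, a * x ∈ N} →
      {I // IsSuperIdeal k A A0 A1 I} := fun N => ⟨N.1 ⊔ A1 * N.1,
    isSuperIdeal_sup_mul hsum hdisj h01 h11 hcentral hanti
      (by rcases hB with rfl | rfl; exacts [Or.inl N.2.1, Or.inr N.2.1]) (mul_le.2 N.2.2)⟩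
  refine StrictMono.wellFoundedGT (f := φ) (Monotone.strictMono_of_injective
    (fun N N' (hle : N.1 ≤ N'.1) => sup_le_sup hle (mul_le_mul_right hle _))
      fun N N' hNN' => Subtype.ext ?_)
  have hinf : (N.1 ⊔ A1 * N.1) ⊓ B = (N'.1 ⊔ A1 * N'.1) ⊓ B :=
    congrArg (· ⊓ B) (congrArg Subtype.val hNN')
  simpa only [sup_inf_assoc_of_le _ N.2.1, sup_inf_assoc_of_le _ N'.2.1, hcompl _ N.2.1,
    hcompl _ N'.2.1, sup_bot_eq] using hinf

end Superalgebra

theorem superNoetherian_iff_general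
    (k A : Type) [Field k] [Ring A] [Algebra k A]
    (A0 A1 : Submodule k A)
    (hsum : A0 ⊔ A1 = ⊤) (hdisj : A0 ⊓ A1 = ⊥)
    (hone : (1 : A) ∈ A0)
    (h00 : ∀ a ∈ A0, ∀ b ∈ A0, a * b ∈ A0)
    (h01 : ∀ a ∈ A0, ∀ b ∈ A1, a * b ∈ A1)
    (h11 : ∀ a ∈ A1, ∀ b ∈ A1, a * b ∈ A0)
    (hcentral : ∀ a ∈ A0, ∀ x : A, a * x = x * a)
    (hanti : ∀ a ∈ A1, ∀ b ∈ A1, a * b = -(b * a)) :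
    SuperNoetherian k A A0 A1 ↔
      ((∀ f : ℕ → Submodule k A,
          (∀ n, f n ≤ A0 ∧ ∀ a ∈ A0, ∀ x ∈ f n, a * x ∈ f n) → Monotone f →
          ∃ n, ∀ m, n ≤ m → f m = f n)
        ∧ (∃ s : Finset A, (s : Set A) ⊆ (A1 : Set A) ∧
            A1 ≤ Submodule.span k {z | ∃ a ∈ A0, ∃ b ∈ (s : Set A), z = a * b})) := by
  let S := A0.toSubalgebra hone fun a b ha hb => h00 a ha b hb
  let A1' := A1.extendScalarsOfMulMem S h01
  constructor
  · intro h
    have hacc := chainCondition_of_superNoetherian hsum hdisj h01 h11 hcentral hanti h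
    have : IsNoetherian S A1' :=
      isNoetherian_of_chainCondition S A1'.subtype A1'.injective_subtype (fun x => x.2)
        (hacc A1 (Or.inr rfl))
    obtain ⟨s, hs⟩ := (Submodule.fg_top A1').1 (IsNoetherian.noetherian ⊤)
    refine ⟨hacc A0 (Or.inl rfl), s, fun x hx => (hs ▸ Submodule.subset_span hx : x ∈ A1'), ?_⟩
    exact (congrArg (Submodule.restrictScalars k) hs).ge.trans
      (Submodule.span_mul_eq_restrictScalars_span S s).ge
  · rintro ⟨hacc, s, -, hs⟩
    have : IsNoetherianRing S :=
      isNoetherian_of_chainCondition S (LinearMap.toSpanSingleton S A 1)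
        (fun x y hxy => Subtype.ext (by simpa [Subalgebra.smul_def] using hxy))
        (fun x => show (x : A) * 1 ∈ A0 by rw [mul_one]; exact x.2) hacc
    have : Module.Finite S A := module_finite_of_sup_eq_top S hsum s hs
    have := isNoetherian_of_isNoetherianRing_of_finite S A
    exact chainCondition_of_isNoetherian S fun I hI a _ x hx => (hI.1 x hx a).1

/-- A supercommutative superalgebra `A = A₀ ⊕ A₁` over a field of
characteristic ≠ 2 is Noetherian (ACC on super-ideals) iff `A₀` is a Noetherian
commutative ring (ACC on its ideals) and `A₁` is a finitely generated `A₀`-module. -/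
theorem superNoetherian_iff
    (k A : Type) [Field k] [Ring A] [Algebra k A]
    (hchar : (2 : k) ≠ 0)
    (A0 A1 : Submodule k A)
    (hsum : A0 ⊔ A1 = ⊤) (hdisj : A0 ⊓ A1 = ⊥)
    (hone : (1 : A) ∈ A0)
    (h00 : ∀ a ∈ A0, ∀ b ∈ A0, a * b ∈ A0)
    (h01 : ∀ a ∈ A0, ∀ b ∈ A1, a * b ∈ A1)
    (h11 : ∀ a ∈ A1, ∀ b ∈ A1, a * b ∈ A0)
    (hcentral : ∀ a ∈ A0, ∀ x : A, a * x = x * a)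
    (hanti : ∀ a ∈ A1, ∀ b ∈ A1, a * b = -(b * a)) :
    SuperNoetherian k A A0 A1 ↔
      ((∀ f : ℕ → Submodule k A,
          (∀ n, f n ≤ A0 ∧ ∀ a ∈ A0, ∀ x ∈ f n, a * x ∈ f n) → Monotone f →
          ∃ n, ∀ m, n ≤ m → f m = f n)
        ∧ (∃ s : Finset A, (s : Set A) ⊆ (A1 : Set A) ∧
            A1 ≤ Submodule.span k {z | ∃ a ∈ A0, ∃ b ∈ (s : Set A), z = a * b})) :=
  superNoetherian_iff_general k A A0 A1 hsum hdisj hone h00 h01 h11 hcentral hanti
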